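/- Let T be a bounded linear operator on a complex Hilbert space H. Then w(T)³ ≤ (1/2) w(T* T²) + (1/2) ‖T‖³. -/
import Mathlib

open scoped InnerProductSpace

variable {H : Type*} [NormedAddCommGroup H] [InnerProductSpace ℂ H] [CompleteSpace H]

omit [CompleteSpace H] in
lemma buzano (a b e : H) (he : ‖e‖ = 1) :
    ‖⟪a, e⟫_ℂ * ⟪e, b⟫_ℂ‖ ≤ (‖a‖ * ‖b‖ + ‖⟪a, b⟫_ℂ‖) / 2 := by
  set s : ℂ := ⟪a, e⟫_ℂ with hs
  set a' : H := ((2 : ℂ) * starRingEnd ℂ s) • e - a with ha'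
  have hnorm : ‖a'‖ = ‖a‖ := by
    have h2 : ‖a'‖ ^ 2 = ‖a‖ ^ 2 := by
      rw [ha', @norm_sub_sq ℂ]
      simp only [RCLike.re_to_complex]
      have h3 : ⟪((2 : ℂ) * starRingEnd ℂ s) • e, a⟫_ℂ = 2 * (s * starRingEnd ℂ s) := by
        rw [inner_smul_left, ← inner_conj_symm e a, map_mul, RingHomCompTriple.comp_apply,
          Complex.conj_ofNat]
        simp only [RingHom.id_apply]
        ring
      rw [h3, norm_smul, he]
      have h4 : Complex.re (2 * (s * starRingEnd ℂ s)) = 2 * ‖s‖ ^ 2 := by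
        rw [Complex.mul_conj]
        simp [Complex.normSq_eq_norm_sq, ← Complex.ofReal_pow]
      rw [h4]
      have h5 : ‖(2 : ℂ) * starRingEnd ℂ s‖ = 2 * ‖s‖ := by
        simp [norm_mul]
      rw [h5]
      ring
    have := congrArg Real.sqrt h2
    rwa [Real.sqrt_sq (norm_nonneg _), Real.sqrt_sq (norm_nonneg _)] at this
  have hinner : ⟪a', b⟫_ℂ = 2 * (s * ⟪e, b⟫_ℂ) - ⟪a, b⟫_ℂ := by
    rw [ha', inner_sub_left, inner_smul_left, map_mul, RingHomCompTriple.comp_apply]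
    rw [Complex.conj_ofNat]
    simp only [RingHom.id_apply]
    ring
  have key : (2 : ℂ) * (s * ⟪e, b⟫_ℂ) = ⟪a', b⟫_ℂ + ⟪a, b⟫_ℂ := by rw [hinner]; ring
  have hle : ‖(2 : ℂ) * (s * ⟪e, b⟫_ℂ)‖ ≤ ‖a‖ * ‖b‖ + ‖⟪a, b⟫_ℂ‖ := by
    rw [key]
    calc ‖⟪a', b⟫_ℂ + ⟪a, b⟫_ℂ‖ ≤ ‖⟪a', b⟫_ℂ‖ + ‖⟪a, b⟫_ℂ‖ := norm_add_le _ _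
      _ ≤ ‖a‖ * ‖b‖ + ‖⟪a, b⟫_ℂ‖ := by
          gcongr
          calc ‖⟪a', b⟫_ℂ‖ ≤ ‖a'‖ * ‖b‖ := norm_inner_le_norm _ _
            _ = ‖a‖ * ‖b‖ := by rw [hnorm]
  rw [norm_mul] at hle
  simp only [Complex.norm_ofNat] at hle
  linarith

/-- The numerical radius of a bounded linear operator. -/
noncomputable def numRadius (T : H →L[ℂ] H) : ℝ :=
  sSup {r : ℝ | ∃ x : H, ‖x‖ = 1 ∧ r = ‖⟪T x, x⟫_ℂ‖}

lemma numRadius_bddAbove (T : H →L[ℂ] H) :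
    BddAbove {r : ℝ | ∃ x : H, ‖x‖ = 1 ∧ r = ‖⟪T x, x⟫_ℂ‖} := by
  refine ⟨‖T‖, fun r ⟨x, hx, hr⟩ => ?_⟩
  calc r = ‖⟪T x, x⟫_ℂ‖ := hr
    _ ≤ ‖T x‖ * ‖x‖ := norm_inner_le_norm _ _
    _ ≤ ‖T‖ * ‖x‖ * ‖x‖ := by gcongr; exact T.le_opNorm x
    _ = ‖T‖ := by rw [hx]; ring

lemma norm_inner_le_numRadius (T : H →L[ℂ] H) {x : H} (hx : ‖x‖ = 1) :
    ‖⟪T x, x⟫_ℂ‖ ≤ numRadius T :=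
  le_csSup (numRadius_bddAbove T) ⟨x, hx, rfl⟩

lemma numRadius_nonneg (T : H →L[ℂ] H) : 0 ≤ numRadius T :=
  Real.sSup_nonneg fun r ⟨_, _, hr⟩ => hr ▸ norm_nonneg _

lemma pointwise (T : H →L[ℂ] H) {x : H} (hx : ‖x‖ = 1) :
    ‖⟪T x, x⟫_ℂ‖ ^ 3 ≤
      (1 / 2) * numRadius (ContinuousLinearMap.adjoint T * T ^ 2) + (1 / 2) * ‖T‖ ^ 3 := by
  set b : H := ContinuousLinearMap.adjoint T (T x) with hb
  have hTx : ‖T x‖ ≤ ‖T‖ := by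
    calc ‖T x‖ ≤ ‖T‖ * ‖x‖ := T.le_opNorm x
      _ = ‖T‖ := by rw [hx, mul_one]
  have hc1 : ‖⟪T x, x⟫_ℂ‖ ≤ ‖T x‖ := by
    calc ‖⟪T x, x⟫_ℂ‖ ≤ ‖T x‖ * ‖x‖ := norm_inner_le_norm _ _
      _ = ‖T x‖ := by rw [hx, mul_one]
  have hxb : ⟪x, b⟫_ℂ = ((‖T x‖ : ℂ)) ^ 2 := by
    rw [hb, ContinuousLinearMap.adjoint_inner_right, inner_self_eq_norm_sq_to_K]
    norm_cast
  have hab : ⟪T x, b⟫_ℂ = ⟪(ContinuousLinearMap.adjoint T * T ^ 2) x, x⟫_ℂ := by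
    rw [hb, ContinuousLinearMap.adjoint_inner_right, ContinuousLinearMap.mul_apply,
      ContinuousLinearMap.adjoint_inner_left]
    simp [pow_two, ContinuousLinearMap.mul_apply]
  have hbnorm : ‖b‖ ≤ ‖T‖ ^ 2 := by
    calc ‖b‖ ≤ ‖ContinuousLinearMap.adjoint T‖ * ‖T x‖ := (ContinuousLinearMap.adjoint T).le_opNorm _
      _ = ‖T‖ * ‖T x‖ := by rw [ContinuousLinearMap.adjoint.norm_map]
      _ ≤ ‖T‖ * ‖T‖ := by gcongr
      _ = ‖T‖ ^ 2 := (sq ‖T‖).symm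
  have hbuz := buzano (T x) b x hx
  have hlhs : ‖⟪T x, x⟫_ℂ * ⟪x, b⟫_ℂ‖ = ‖⟪T x, x⟫_ℂ‖ * ‖T x‖ ^ 2 := by
    rw [norm_mul, hxb]
    norm_cast
    simp [abs_of_nonneg (norm_nonneg (T x))]
  have hw : ‖⟪T x, b⟫_ℂ‖ ≤ numRadius (ContinuousLinearMap.adjoint T * T ^ 2) := by
    rw [hab]; exact norm_inner_le_numRadius _ hx
  have key : ‖⟪T x, x⟫_ℂ‖ * ‖T x‖ ^ 2 ≤
      (‖T‖ ^ 3 + numRadius (ContinuousLinearMap.adjoint T * T ^ 2)) / 2 := by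
    rw [← hlhs]
    refine hbuz.trans ?_
    have : ‖T x‖ * ‖b‖ ≤ ‖T‖ ^ 3 := by
      calc ‖T x‖ * ‖b‖ ≤ ‖T‖ * ‖T‖ ^ 2 := by gcongr <;> positivity
        _ = ‖T‖ ^ 3 := by ring
    linarith
  have h3 : ‖⟪T x, x⟫_ℂ‖ ^ 3 ≤ ‖⟪T x, x⟫_ℂ‖ * ‖T x‖ ^ 2 := by
    have h0 : (0 : ℝ) ≤ ‖⟪T x, x⟫_ℂ‖ := norm_nonneg _
    have h2 : ‖⟪T x, x⟫_ℂ‖ ^ 2 ≤ ‖T x‖ ^ 2 := by gcongr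
    calc ‖⟪T x, x⟫_ℂ‖ ^ 3 = ‖⟪T x, x⟫_ℂ‖ * ‖⟪T x, x⟫_ℂ‖ ^ 2 := by ring
      _ ≤ ‖⟪T x, x⟫_ℂ‖ * ‖T x‖ ^ 2 := mul_le_mul_of_nonneg_left h2 h0
  linarith

theorem eqn5 (T : H →L[ℂ] H) :
    (numRadius T) ^ 3 ≤ (1 / 2) * numRadius (ContinuousLinearMap.adjoint T * T ^ 2) + (1 / 2) * ‖T‖ ^ 3 := by
  set C : ℝ := (1 / 2) * numRadius (ContinuousLinearMap.adjoint T * T ^ 2) + (1 / 2) * ‖T‖ ^ 3 with hC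
  have hC0 : 0 ≤ C := by
    have := numRadius_nonneg (ContinuousLinearMap.adjoint T * T ^ 2)
    positivity
  have hsup : numRadius T ≤ C ^ ((3 : ℝ)⁻¹) := by
    refine Real.sSup_le (fun r hr => ?_) (Real.rpow_nonneg hC0 _)
    obtain ⟨x, hx, hrx⟩ := hr
    have h0 : 0 ≤ r := hrx ▸ norm_nonneg _
    rw [Real.le_rpow_inv_iff_of_pos h0 hC0 (by norm_num : (0:ℝ) < 3)]
    have : r ^ (3 : ℝ) = r ^ (3 : ℕ) := by
      rw [← Real.rpow_natCast]; norm_num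
    rw [this, hrx]
    exact pointwise T hx
  calc (numRadius T) ^ 3 ≤ (C ^ ((3 : ℝ)⁻¹)) ^ 3 := by
        gcongr
        exact numRadius_nonneg T
    _ = C := by
        rw [← Real.rpow_natCast (C ^ ((3:ℝ)⁻¹)), ← Real.rpow_mul hC0]
        norm_num
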